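/- arXiv:2304.08397 — 7 statements merged into one kernel-verified Lean document; each statement's English description precedes it below -/
import Mathlib

section
/- Let C be a code in C_t(n,k) and let ρ be a monomial transformation of F_q^n. Then ρ(C) also belongs to C_t(n,k), and C and ρ(C) lie in the same connected component of the graph Δ_t(n,k). Consequently, the whole orbit of C under the monomial group is contained in a single connected component of Δ_t(n,k). -/
open Finset

variable (F : Type) [Field F] [Fintype F] [DecidableEq F]

/-- The dual code of a linear code `C ⊆ F^n`, with respect to the standard bilinear form. -/
def dualCode (n : ℕ) (C : Submodule F (Fin n → F)) : Submodule F (Fin n → F) where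
  carrier := {v | ∀ c ∈ C, ∑ i, v i * c i = 0}
  zero_mem' := by intro c _; simp
  add_mem' := by
    intro a b ha hb c hc
    simp only [Set.mem_setOf_eq] at *
    simp [add_mul, Finset.sum_add_distrib, ha c hc, hb c hc]
  smul_mem' := by
    intro r a ha c hc
    simp only [Set.mem_setOf_eq] at *
    simp [smul_eq_mul, mul_assoc, ← Finset.mul_sum, ha c hc]

/-- `goodCode F n t k C` says that `C` is an `[n,k]`-linear code over `F` whose dual minimum
distance is at least `t+1`, i.e. `C ∈ C_t(n,k)`. -/
def goodCode (n t k : ℕ) (C : Submodule F (Fin n → F)) : Prop :=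
  Module.finrank F C = k ∧ ∀ v ∈ dualCode F n C, v ≠ 0 → t + 1 ≤ hammingNorm v

/-- The Grassmann graph `Δ_t(n,k)` of codes in `C_t(n,k)`: two codes are adjacent iff
their intersection has dimension `k-1`. -/
def deltaGraph (n t k : ℕ) : SimpleGraph {C : Submodule F (Fin n → F) // goodCode F n t k C} where
  Adj X Y := X ≠ Y ∧ Module.finrank F ↥(X.1 ⊓ Y.1) = k - 1
  symm := by
    constructor
    rintro X Y ⟨h1, h2⟩
    exact ⟨h1.symm, by rwa [inf_comm]⟩
  loopless := by constructor; rintro X ⟨h1, _⟩; exact h1 rfl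

/-- The graph `Λ_t(n,k)` of codes in `C_t(n,k)`: two codes are adjacent iff
their intersection belongs to `C_t(n,k-1)`. -/
def lambdaGraph (n t k : ℕ) : SimpleGraph {C : Submodule F (Fin n → F) // goodCode F n t k C} where
  Adj X Y := X ≠ Y ∧ goodCode F n t (k-1) (X.1 ⊓ Y.1)
  symm := by
    constructor
    rintro X Y ⟨h1, h2⟩
    exact ⟨h1.symm, by rwa [inf_comm]⟩
  loopless := by constructor; rintro X ⟨h1, _⟩; exact h1 rfl

/-- A code `C ∈ C_t(n,k)` is isolated if no `(k-1)`-dimensional subspace of `C`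
belongs to `C_t(n,k-1)`. -/
def IsIsolated (n t k : ℕ) (C : Submodule F (Fin n → F)) : Prop :=
  ∀ D : Submodule F (Fin n → F), D ≤ C → ¬ goodCode F n t (k-1) D

/-- A monomial transformation of `F^n`: a permutation of the coordinates composed with
multiplication of each coordinate by a nonzero scalar. -/
def IsMonomial (n : ℕ) (ρ : (Fin n → F) ≃ₗ[F] (Fin n → F)) : Prop :=
  ∃ (σ : Equiv.Perm (Fin n)) (d : Fin n → F),
    (∀ i, d i ≠ 0) ∧ ∀ (v : Fin n → F) (i : Fin n), ρ v i = d i * v (σ i)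

/-- `S_s(Ω)`: the set of points (`1`-dimensional subspaces) of `PG(k-1,q)` lying on a subspace
spanned by `s+1` points of `Ω`. (We represent any subspace by the corresponding submodule of
`F^k`, and points of `PG(k-1,q)` by `1`-dimensional submodules.) -/
def satPoints (k s : ℕ) (Ω : Set (Submodule F (Fin k → F))) : Set (Submodule F (Fin k → F)) :=
  {P | ∃ T : Finset (Submodule F (Fin k → F)), ↑T ⊆ Ω ∧ T.card = s + 1 ∧ P ≤ T.sup id}

/-- A set `Ω` of points of `PG(k-1,q)` is `s`-saturating if `S_s(Ω)` is the whole point set of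
`PG(k-1,q)` while (for `s ≥ 1`) `S_{s-1}(Ω)` is not. -/
def IsSaturating (k s : ℕ) (Ω : Set (Submodule F (Fin k → F))) : Prop :=
  (∀ P : Submodule F (Fin k → F), Module.finrank F P = 1 → P ∈ satPoints F k s Ω) ∧
  (1 ≤ s → ¬ ∀ P : Submodule F (Fin k → F), Module.finrank F P = 1 → P ∈ satPoints F k (s-1) Ω)

/-! A monomial map is a product of transpositions of two coordinates and rescalings of one
coordinate, and each of these fixes a hyperplane `ker φ` pointwise. Such a map `τ` satisfies
`X ⊓ ker φ ≤ X ⊓ τ X`, so `dim (X ⊓ τ X) ≥ k - 1` for every `k`-dimensional code `X`: the codes `X`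
and `τ X` are equal or adjacent in `Δ_t(n,k)`. Monomial maps preserve `C_t(n,k)` because the dual
of `ρ C` is the image of the dual of `C` under another monomial map, which preserves weights. -/

open Module

theorem Submodule.finrank_le_finrank_inf_map_add_one {K V : Type*} [Field K] [AddCommGroup V]
    [Module K V] [FiniteDimensional K V] {τ : V →ₗ[K] V} {φ : V →ₗ[K] K}
    (hτ : ∀ v, φ v = 0 → τ v = v) (X : Submodule K V) :
    finrank K X ≤ finrank K ↥(X ⊓ X.map τ) + 1 := by
  set ψ := φ ∘ₗ X.subtype
  have h_rank_nullity := LinearMap.finrank_range_add_finrank_ker ψ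
  have h_range : finrank K (LinearMap.range ψ) ≤ 1 := by
    simpa using Submodule.finrank_le (LinearMap.range ψ)
  have h_ker : (LinearMap.ker ψ).map X.subtype ≤ X ⊓ X.map τ := by
    rintro _ ⟨⟨x, hx⟩, hψx, rfl⟩
    exact ⟨hx, x, hx, hτ x hψx⟩
  have h_mono := Submodule.finrank_mono h_ker
  rw [Submodule.finrank_map_subtype_eq] at h_mono
  omega

theorem hammingNorm_comp_equiv {ι ι' β : Type*} [Fintype ι] [Fintype ι'] [Zero β] [DecidableEq β]
    (x : ι → β) (e : ι' ≃ ι) : hammingNorm (x ∘ e) = hammingNorm x :=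
  Finset.card_equiv e (by simp)

section

variable {K : Type} [Field K]

theorem isMonomial_funCongrLeft {n : ℕ} (σ : Equiv.Perm (Fin n)) :
    IsMonomial K n (LinearEquiv.funCongrLeft K K σ) :=
  ⟨σ, 1, fun _ => one_ne_zero, fun v i => by simp⟩

variable (K) in
noncomputable def diagonalAut (n : ℕ) : (Fin n → Kˣ) →* ((Fin n → K) ≃ₗ[K] (Fin n → K)) :=
  (DistribMulAction.toModuleAut K (Fin n → K)).comp MulEquiv.piUnits.symm.toMonoidHom

@[simp]
theorem diagonalAut_apply {n : ℕ} (u : Fin n → Kˣ) (v : Fin n → K) (i : Fin n) :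
    diagonalAut K n u v i = u i * v i := by
  simp [diagonalAut, Units.smul_def]

theorem isMonomial_diagonalAut {n : ℕ} (u : Fin n → Kˣ) : IsMonomial K n (diagonalAut K n u) :=
  ⟨1, fun i => u i, fun i => (u i).ne_zero, fun v i => by simp⟩

variable [DecidableEq K]

theorem goodCode_map_of_isMonomial {n t k : ℕ} {ρ : (Fin n → K) ≃ₗ[K] (Fin n → K)}
    (hρ : IsMonomial K n ρ) {C : Submodule K (Fin n → K)} (hC : goodCode K n t k C) :
    goodCode K n t k (C.map ρ.toLinearMap) := by
  obtain ⟨σ, d, hd, hρ⟩ := hρ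
  refine ⟨(LinearEquiv.finrank_map_eq ρ C).trans hC.1, fun v hv hv0 => ?_⟩
  set w : Fin n → K := (fun i => v i * d i) ∘ σ.symm
  have hw : w ∈ dualCode K n C := fun c hc => by
    rw [← hv (ρ c) ⟨c, hc, rfl⟩]
    refine Fintype.sum_equiv σ.symm _ _ fun j => ?_
    simp [w, hρ, mul_assoc]
  have h_norm : hammingNorm w = hammingNorm v := by
    rw [hammingNorm_comp_equiv, hammingNorm_comp (fun i a => a * d i)
      (fun i => mul_left_injective₀ (hd i)) (fun i => zero_mul _)]
  have hw0 : w ≠ 0 := by rwa [← hammingNorm_ne_zero_iff, h_norm, hammingNorm_ne_zero_iff]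
  exact h_norm ▸ hC.2 w hw hw0

theorem deltaGraph_reachable_of_le_finrank_inf_add_one {n t k : ℕ}
    {X Y : {C : Submodule K (Fin n → K) // goodCode K n t k C}}
    (h : k ≤ finrank K ↥(X.1 ⊓ Y.1) + 1) : (deltaGraph K n t k).Reachable X Y := by
  by_cases hXY : X = Y
  · exact hXY ▸ .refl X
  have h_lt : finrank K ↥(X.1 ⊓ Y.1) < k := by
    by_contra! h_ge
    have hX := Submodule.eq_of_le_of_finrank_le inf_le_left (X.2.1.trans_le h_ge)
    have hY := Submodule.eq_of_le_of_finrank_le inf_le_right (Y.2.1.trans_le h_ge)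
    exact hXY (Subtype.ext (hX.symm.trans hY))
  exact SimpleGraph.Adj.reachable ⟨hXY, by omega⟩

variable (K) in
def componentPreservingAut (n t k : ℕ) : Submonoid ((Fin n → K) ≃ₗ[K] (Fin n → K)) where
  carrier := {τ | ∀ X (hX : goodCode K n t k X), ∃ hτX : goodCode K n t k (X.map τ.toLinearMap),
    (deltaGraph K n t k).Reachable ⟨X, hX⟩ ⟨_, hτX⟩}
  one_mem' X hX := by
    rw [show X.map (1 : (Fin n → K) ≃ₗ[K] (Fin n → K)).toLinearMap = X from Submodule.map_id X]
    exact ⟨hX, .refl _⟩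
  mul_mem' {f g} hf hg X hX := by
    obtain ⟨hgX, h_reach_g⟩ := hg X hX
    obtain ⟨hfgX, h_reach_f⟩ := hf _ hgX
    rw [show X.map (f * g).toLinearMap = (X.map g.toLinearMap).map f.toLinearMap from
      Submodule.map_comp _ _ X]
    exact ⟨hfgX, h_reach_g.trans h_reach_f⟩

theorem mem_componentPreservingAut_of_fixes_ker {n t k : ℕ} {τ : (Fin n → K) ≃ₗ[K] (Fin n → K)}
    (hτ : IsMonomial K n τ) {φ : (Fin n → K) →ₗ[K] K} (hφ : ∀ v, φ v = 0 → τ v = v) :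
    τ ∈ componentPreservingAut K n t k := fun X hX =>
  ⟨goodCode_map_of_isMonomial hτ hX, deltaGraph_reachable_of_le_finrank_inf_add_one <|
    hX.1 ▸ Submodule.finrank_le_finrank_inf_map_add_one (τ := τ.toLinearMap) hφ X⟩

theorem funCongrLeft_mem_componentPreservingAut {n t k : ℕ} (σ : Equiv.Perm (Fin n)) :
    LinearEquiv.funCongrLeft K K σ ∈ componentPreservingAut K n t k := by
  induction σ using Equiv.Perm.swap_induction_on with
  | one => exact one_mem _
  | swap_mul σ x y _ ih =>
    rw [show LinearEquiv.funCongrLeft K K (Equiv.swap x y * σ) =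
      LinearEquiv.funCongrLeft K K σ * LinearEquiv.funCongrLeft K K (Equiv.swap x y) from
      LinearEquiv.ext fun _ => rfl]
    refine mul_mem ih <| mem_componentPreservingAut_of_fixes_ker (isMonomial_funCongrLeft _)
      (φ := (LinearMap.proj x : (Fin n → K) →ₗ[K] K) - LinearMap.proj y)
      fun v hv => funext fun i => ?_
    have hxy : v x = v y := sub_eq_zero.mp hv
    simp only [LinearEquiv.funCongrLeft_apply, LinearMap.funLeft_apply, Equiv.swap_apply_def]
    split_ifs with hix hiy
    · rw [hix, hxy]
    · rw [hiy, hxy]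
    · rfl

theorem diagonalAut_mem_componentPreservingAut {n t k : ℕ} (u : Fin n → Kˣ) :
    diagonalAut K n u ∈ componentPreservingAut K n t k := by
  suffices u ∈ (componentPreservingAut K n t k).comap (diagonalAut K n) from this
  rw [← Finset.univ_prod_mulSingle u]
  refine Submonoid.prod_mem _ fun i _ => mem_componentPreservingAut_of_fixes_ker
    (isMonomial_diagonalAut _) (φ := LinearMap.proj i) fun v hv => funext fun j => ?_
  rcases eq_or_ne j i with rfl | hji
  · simp [show v j = 0 from hv]
  · simp [hji]

end

theorem monomial_orbit_in_connected_component_delta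
    {n k t : ℕ}
    (C : Submodule F (Fin n → F)) (hC : goodCode F n t k C)
    (ρ : (Fin n → F) ≃ₗ[F] (Fin n → F)) (hρ : IsMonomial F n ρ) :
    ∃ h' : goodCode F n t k (Submodule.map ρ.toLinearMap C),
      (deltaGraph F n t k).Reachable ⟨C, hC⟩ ⟨Submodule.map ρ.toLinearMap C, h'⟩ := by
  obtain ⟨σ, d, hd, hρ⟩ := hρ
  have h_factor : ρ = diagonalAut F n (fun i => Units.mk0 (d i) (hd i)) *
      LinearEquiv.funCongrLeft F F σ :=
    LinearEquiv.ext fun v => funext fun i => by simp [hρ]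
  subst h_factor
  exact mul_mem (diagonalAut_mem_componentPreservingAut _)
    (funCongrLeft_mem_componentPreservingAut σ) C hC
end

section
/- Let C, C' ∈ C_t(n,k) and suppose D and D' are (k−1)-dimensional subspaces of C and C' respectively with D, D' ∈ C_t(n,k−1). If D and D' lie in the same connected component of the graph Δ_t(n,k−1), then C and C' lie in the same connected component of the graph Λ_t(n,k). -/
open Finset

variable (F : Type) [Field F] [Fintype F] [DecidableEq F]

/-! Two distinct `k`-dimensional spaces containing a common `(k-1)`-dimensional space meet exactly in
it, so codes of `C_t(n,k)` sharing a subcode in `C_t(n,k-1)` are equal or adjacent in `Λ_t(n,k)`. Along an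
edge `D ~ D'` of `Δ_t(n,k-1)` the span `D ⊔ D'` is `k`-dimensional and, containing `D`, still has dual
minimum distance at least `t+1`; it links a code over `D` to a code over `D'` in two such steps. -/

namespace Submodule

variable {K V : Type*} [DivisionRing K] [AddCommGroup V] [Module K V] [FiniteDimensional K V]

theorem eq_inf_of_finrank_eq_sub_one {k : ℕ} {C C' D : Submodule K V} (hCC' : C ≠ C')
    (hC : Module.finrank K C = k) (hC' : Module.finrank K C' = k)
    (hD : Module.finrank K D = k - 1) (hDC : D ≤ C) (hDC' : D ≤ C') : D = C ⊓ C' := by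
  have hlt : C ⊓ C' < C := inf_le_left.lt_of_ne fun h =>
    hCC' (eq_of_le_of_finrank_eq (h ▸ inf_le_right) (hC.trans hC'.symm))
  have hinf : Module.finrank K ↥(C ⊓ C') < k := hC ▸ finrank_lt_finrank_of_lt hlt
  have hle : D ≤ C ⊓ C' := le_inf hDC hDC'
  exact eq_of_le_of_finrank_eq hle (by have := finrank_mono hle; omega)

theorem finrank_sup_of_finrank_inf_eq_sub_one {k : ℕ} {U W : Submodule K V} (hUW : U ≠ W)
    (hU : Module.finrank K U = k - 1) (hW : Module.finrank K W = k - 1)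
    (hinf : Module.finrank K ↥(U ⊓ W) = k - 1 - 1) : Module.finrank K ↥(U ⊔ W) = k := by
  have hk : 2 ≤ k := by
    by_contra! hk
    have h0 : k - 1 = 0 := by omega
    exact hUW ((finrank_eq_zero.mp (hU.trans h0)).trans (finrank_eq_zero.mp (hW.trans h0)).symm)
  have := finrank_sup_add_finrank_inf_eq U W
  omega

end Submodule

section

variable {K : Type} [Field K]

theorem dualCode_anti {n : ℕ} {A B : Submodule K (Fin n → K)} (h : A ≤ B) :
    dualCode K n B ≤ dualCode K n A := fun _ hv c hc => hv c (h hc)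

variable [DecidableEq K]

theorem goodCode.of_le {n t j k : ℕ} {A B : Submodule K (Fin n → K)} (hA : goodCode K n t j A)
    (hAB : A ≤ B) (hB : Module.finrank K B = k) : goodCode K n t k B :=
  ⟨hB, fun v hv => hA.2 v (dualCode_anti hAB hv)⟩

theorem deltaGraph.goodCode_sup_of_adj {n t k : ℕ} {U W : {C // goodCode K n t (k - 1) C}}
    (h : (deltaGraph K n t (k - 1)).Adj U W) : goodCode K n t k (U.1 ⊔ W.1) :=
  U.2.of_le le_sup_left <| Submodule.finrank_sup_of_finrank_inf_eq_sub_one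
    (fun hUW => h.1 (Subtype.ext hUW)) U.2.1 W.2.1 h.2

theorem lambdaGraph.reachable_of_le_of_le {n t k : ℕ} {C C' D : Submodule K (Fin n → K)}
    (hC : goodCode K n t k C) (hC' : goodCode K n t k C') (hD : goodCode K n t (k - 1) D)
    (hDC : D ≤ C) (hDC' : D ≤ C') : (lambdaGraph K n t k).Reachable ⟨C, hC⟩ ⟨C', hC'⟩ := by
  by_cases hCC' : C = C'
  · subst hCC'
    rfl
  · refine SimpleGraph.Adj.reachable ⟨fun h => hCC' (congrArg Subtype.val h), ?_⟩
    rwa [← Submodule.eq_inf_of_finrank_eq_sub_one hCC' hC.1 hC'.1 hD.1 hDC hDC']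

theorem lambdaGraph.reachable_of_deltaGraph_walk {n t k : ℕ}
    {U U' : {C // goodCode K n t (k - 1) C}} (w : (deltaGraph K n t (k - 1)).Walk U U')
    {C C' : Submodule K (Fin n → K)} (hC : goodCode K n t k C) (hC' : goodCode K n t k C')
    (hUC : U.1 ≤ C) (hU'C' : U'.1 ≤ C') : (lambdaGraph K n t k).Reachable ⟨C, hC⟩ ⟨C', hC'⟩ := by
  induction w generalizing C with
  | @nil V => exact reachable_of_le_of_le hC hC' V.2 hUC hU'C'
  | @cons V _ _ h _ ih =>
    have hB := deltaGraph.goodCode_sup_of_adj h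
    exact (reachable_of_le_of_le hC hB V.2 hUC le_sup_left).trans (ih hB le_sup_right hU'C')

end

theorem reachable_lambda_of_reachable_delta_subcodes
    {n k t : ℕ}
    (C C' : Submodule F (Fin n → F)) (hC : goodCode F n t k C) (hC' : goodCode F n t k C')
    (D D' : Submodule F (Fin n → F)) (hDC : D ≤ C) (hD'C' : D' ≤ C')
    (hD : goodCode F n t (k-1) D) (hD' : goodCode F n t (k-1) D')
    (hreach : (deltaGraph F n t (k-1)).Reachable ⟨D, hD⟩ ⟨D', hD'⟩) :
    (lambdaGraph F n t k).Reachable ⟨C, hC⟩ ⟨C', hC'⟩ :=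
  hreach.elim fun w => lambdaGraph.reachable_of_deltaGraph_walk w hC hC' hDC hD'C'
end

section
/- Suppose the graph Δ_t(n,k−1) is connected. Then all elements of C_t(n,k) \ I_t(n,k) (the non-isolated codes) belong to the same connected component of Λ_t(n,k); in particular, the induced subgraph Λ̃_t(n,k) is connected. -/
open Finset

variable (F : Type) [Field F] [Fintype F] [DecidableEq F]

/-! A non-isolated code `X ∈ C_t(n,k)` contains some `D ∈ C_t(n,k-1)`, and two distinct codes of
`C_t(n,k)` containing the same `D` meet exactly in `D`, so they are adjacent in `Λ_t(n,k)`.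
Given a walk `D₀ ~ D₁ ~ ⋯ ~ D_r` in `Δ_t(n,k-1)` between such subcodes of `X` and `Y`, each
`D_i ⊔ D_{i+1}` is `k`-dimensional and lies in `C_t(n,k)`, because enlarging a code shrinks its
dual. These joins are non-isolated, and consecutive ones share `D_{i+1}`, which gives the path
`X ~ D₀ ⊔ D₁ ~ ⋯ ~ D_{r-1} ⊔ D_r ~ Y` in `Λ̃_t(n,k)`. -/

abbrev lambdaTildeGraph (n t k : ℕ) :
    SimpleGraph {X : {C : Submodule F (Fin n → F) // goodCode F n t k C} |
      ¬ IsIsolated F n t k X.1} :=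
  (lambdaGraph F n t k).induce {X | ¬ IsIsolated F n t k X.1}

omit [Fintype F] [DecidableEq F] in
theorem dualCode_anti_s3 (n : ℕ) : Antitone (dualCode F n) :=
  fun _ _ hCD _ hv c hc => hv c (hCD hc)

omit [Fintype F] in
theorem goodCode_of_le {n t k m : ℕ} {C D : Submodule F (Fin n → F)} (hCD : C ≤ D)
    (hC : goodCode F n t k C) (hD : Module.finrank F D = m) : goodCode F n t m D :=
  ⟨hD, fun v hv => hC.2 v (dualCode_anti_s3 F n hCD hv)⟩

omit [Fintype F] in
theorem not_isIsolated_iff {n t k : ℕ} {C : Submodule F (Fin n → F)} :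
    ¬ IsIsolated F n t k C ↔ ∃ D ≤ C, goodCode F n t (k - 1) D := by
  simp [IsIsolated]

omit [Fintype F] in
theorem finrank_sup_of_deltaGraph_adj {n t m : ℕ}
    {D E : {C : Submodule F (Fin n → F) // goodCode F n t m C}}
    (h : (deltaGraph F n t m).Adj D E) : Module.finrank F ↥(D.1 ⊔ E.1) = m + 1 := by
  obtain ⟨hne, hinf⟩ := h
  have hm : m ≠ 0 := by
    rintro rfl
    exact hne <| Subtype.ext <|
      (Submodule.finrank_eq_zero.mp D.2.1).trans (Submodule.finrank_eq_zero.mp E.2.1).symm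
  have hdim := Submodule.finrank_sup_add_finrank_inf_eq D.1 E.1
  rw [D.2.1, E.2.1, hinf] at hdim
  omega

omit [Fintype F] in
theorem goodCode_sup_of_deltaGraph_adj {n t m : ℕ}
    {D E : {C : Submodule F (Fin n → F) // goodCode F n t m C}}
    (h : (deltaGraph F n t m).Adj D E) : goodCode F n t (m + 1) (D.1 ⊔ E.1) :=
  goodCode_of_le F le_sup_left D.2 (finrank_sup_of_deltaGraph_adj F h)

omit [Fintype F] [DecidableEq F] in
theorem inf_eq_of_finrank_eq_succ {n : ℕ} {D X Y : Submodule F (Fin n → F)}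
    (hDX : D ≤ X) (hDY : D ≤ Y) (hX : Module.finrank F X = Module.finrank F D + 1)
    (hY : Module.finrank F Y = Module.finrank F X) (hXY : X ≠ Y) : X ⊓ Y = D := by
  have hlt : X ⊓ Y < X := by
    refine inf_le_left.lt_of_ne fun h => hXY ?_
    exact Submodule.eq_of_le_of_finrank_eq (h ▸ inf_le_right) hY.symm
  have hle : Module.finrank F D ≤ Module.finrank F ↥(X ⊓ Y) :=
    Submodule.finrank_mono (le_inf hDX hDY)
  have hlt' := Submodule.finrank_lt_finrank_of_lt hlt
  exact (Submodule.eq_of_le_of_finrank_eq (le_inf hDX hDY) (by omega)).symm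

omit [Fintype F] in
theorem lambdaGraph_adj_of_le_of_le {n t m : ℕ} {D : Submodule F (Fin n → F)}
    (hD : goodCode F n t m D) {X Y : {C : Submodule F (Fin n → F) // goodCode F n t (m + 1) C}}
    (hDX : D ≤ X.1) (hDY : D ≤ Y.1) (hXY : X ≠ Y) : (lambdaGraph F n t (m + 1)).Adj X Y := by
  refine ⟨hXY, ?_⟩
  rw [inf_eq_of_finrank_eq_succ F hDX hDY (by rw [X.2.1, hD.1]) (Y.2.1.trans X.2.1.symm)
    (Subtype.coe_ne_coe.mpr hXY)]
  exact hD

omit [Fintype F] in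
theorem lambdaTildeGraph_reachable_of_le_of_le {n t m : ℕ} {D : Submodule F (Fin n → F)}
    (hD : goodCode F n t m D)
    {X Y : {X : {C : Submodule F (Fin n → F) // goodCode F n t (m + 1) C} |
      ¬ IsIsolated F n t (m + 1) X.1}}
    (hDX : D ≤ X.1.1) (hDY : D ≤ Y.1.1) : (lambdaTildeGraph F n t (m + 1)).Reachable X Y := by
  obtain rfl | hXY := eq_or_ne X Y
  · rfl
  · exact SimpleGraph.Adj.reachable (G := lambdaTildeGraph F n t (m + 1))
      (lambdaGraph_adj_of_le_of_le F hD hDX hDY (Subtype.coe_ne_coe.mpr hXY))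

omit [Fintype F] in
theorem lambdaTildeGraph_reachable_of_walk {n t m : ℕ}
    {D D' : {C : Submodule F (Fin n → F) // goodCode F n t m C}}
    (w : (deltaGraph F n t m).Walk D D')
    {X Y : {X : {C : Submodule F (Fin n → F) // goodCode F n t (m + 1) C} |
      ¬ IsIsolated F n t (m + 1) X.1}}
    (hDX : D.1 ≤ X.1.1) (hDY : D'.1 ≤ Y.1.1) : (lambdaTildeGraph F n t (m + 1)).Reachable X Y := by
  induction w generalizing X with
  | @nil D => exact lambdaTildeGraph_reachable_of_le_of_le F D.2 hDX hDY
  | @cons D E _ h _ ih =>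
    let Z : {X : {C : Submodule F (Fin n → F) // goodCode F n t (m + 1) C} |
        ¬ IsIsolated F n t (m + 1) X.1} :=
      ⟨⟨D.1 ⊔ E.1, goodCode_sup_of_deltaGraph_adj F h⟩,
        (not_isIsolated_iff F).mpr ⟨D.1, le_sup_left, D.2⟩⟩
    exact (lambdaTildeGraph_reachable_of_le_of_le F D.2 (Y := Z) hDX le_sup_left).trans
      (ih (X := Z) le_sup_right hDY)

theorem lambdaTilde_connected_of_delta_connected
    {n k t : ℕ} (hk : 0 < k)
    (hconn : (deltaGraph F n t (k-1)).Preconnected) :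
    (∀ X Y : {C : Submodule F (Fin n → F) // goodCode F n t k C},
        ¬ IsIsolated F n t k X.1 → ¬ IsIsolated F n t k Y.1 →
        (lambdaGraph F n t k).Reachable X Y) ∧
    ((lambdaGraph F n t k).induce
        {X : {C : Submodule F (Fin n → F) // goodCode F n t k C} |
          ¬ IsIsolated F n t k X.1}).Preconnected := by
  obtain ⟨m, rfl⟩ : ∃ m, k = m + 1 := ⟨k - 1, by omega⟩
  have hpre : (lambdaTildeGraph F n t (m + 1)).Preconnected := by
    intro X Y
    obtain ⟨D, hDX, hD⟩ := (not_isIsolated_iff F).mp X.2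
    obtain ⟨D', hDY, hD'⟩ := (not_isIsolated_iff F).mp Y.2
    obtain ⟨w⟩ := hconn ⟨D, hD⟩ ⟨D', hD'⟩
    exact lambdaTildeGraph_reachable_of_walk F w hDX hDY
  refine ⟨fun X Y hX hY => ?_, hpre⟩
  exact (hpre ⟨X, hX⟩ ⟨Y, hY⟩).map (SimpleGraph.Embedding.induce _).toHom
end

section
/- Let C ∈ C_1(n,k) with basis b_1,...,b_k, and let P_i := (b_1(i),...,b_k(i)) ∈ F_q^k for i = 1,...,n be the columns of the corresponding generator matrix. Then C is isolated if and only if every nonzero vector of F_q^k is a nonzero scalar multiple of some column P_i, i.e., the columns are vector representatives of all the points of the projective space PG(k−1,q). -/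
/-!
Through a basis of `C`, the coordinate functionals of `C` become the columns `P_i`, and the
subcodes of dimension `k - 1` become the kernels of the nonzero functionals `v`. Such a subcode
is degenerate exactly when some coordinate vanishes on it, i.e. when `ker v ≤ ker P_i`, i.e.
when `P_i` is a multiple of `v`; as `C` is non-degenerate, `P_i ≠ 0` and the multiple is
nonzero.
-/

open Finset

variable (F : Type) [Field F] [Fintype F] [DecidableEq F]

open Module LinearMap

section Hyperplanes

variable {K V : Type*} [Field K] [AddCommGroup V] [Module K V]

theorem Module.Dual.exists_eq_smul_of_ker_le {f g : Dual K V} (h : ker f ≤ ker g) :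
    ∃ c : K, g = c • f := by
  have hg : g ∈ Submodule.span K (Set.range fun _ : Unit => f) :=
    mem_span_of_iInf_ker_le_ker (by simpa using h)
  rw [Set.range_const, Submodule.mem_span_singleton] at hg
  obtain ⟨c, hc⟩ := hg
  exact ⟨c, hc.symm⟩

theorem Submodule.exists_dual_ne_zero_ker_eq [FiniteDimensional K V] {W : Submodule K V}
    (hW : finrank K W + 1 = finrank K V) : ∃ f : Dual K V, f ≠ 0 ∧ ker f = W := by
  have hlt : W < ⊤ := by
    refine lt_top_iff_ne_top.2 fun htop => ?_
    rw [htop, finrank_top] at hW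
    omega
  obtain ⟨f, hf, hWf⟩ := W.exists_le_ker_of_lt_top hlt
  refine ⟨f, hf, (Submodule.eq_of_le_of_finrank_eq hWf ?_).symm⟩
  have := Module.Dual.finrank_ker_add_one_of_ne_zero hf
  omega

/-- Hyperplanes are the kernels of nonzero functionals, and `ker f ≤ ker ℓ` forces
`ℓ ∈ K ∙ f`. -/
theorem forall_hyperplane_le_ker_iff [FiniteDimensional K V] {ι : Type*} (ℓ : ι → Dual K V)
    (hℓ : ∀ i, ℓ i ≠ 0) :
    (∀ W : Submodule K V, finrank K W + 1 = finrank K V → ∃ i, W ≤ ker (ℓ i)) ↔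
      ∀ f : Dual K V, f ≠ 0 → ∃ i, ∃ c : K, c ≠ 0 ∧ f = c • ℓ i := by
  constructor
  · intro hW f hf
    obtain ⟨i, hi⟩ := hW _ (Module.Dual.finrank_ker_add_one_of_ne_zero hf)
    obtain ⟨c, hc⟩ := Module.Dual.exists_eq_smul_of_ker_le hi
    have hc0 : c ≠ 0 := by
      rintro rfl
      exact hℓ i (by simpa using hc)
    exact ⟨i, c⁻¹, inv_ne_zero hc0, by rw [hc, inv_smul_smul₀ hc0]⟩
  · intro hf W hW
    obtain ⟨f, hf0, rfl⟩ := W.exists_dual_ne_zero_ker_eq hW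
    obtain ⟨i, c, hc, rfl⟩ := hf f hf0
    exact ⟨i, (ker_smul _ _ hc).le⟩

end Hyperplanes

theorem Pi.eq_smul_single_one_of_hammingNorm_le_one {ι K : Type*} [Fintype ι] [DecidableEq ι]
    [Field K] [DecidableEq K] {v : ι → K} (hv : hammingNorm v ≤ 1) {i : ι} (hi : v i ≠ 0) :
    v = v i • Pi.single i 1 := by
  funext j
  by_cases hji : j = i
  · simp [hji]
  · have hvj : v j = 0 := by
      by_contra hj
      exact hji (Finset.card_le_one.1 hv j (by simpa using hj) i (by simpa using hi))
    simp [hji, hvj]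

section Codes

variable {F}

omit [Fintype F] [DecidableEq F] in
theorem single_one_mem_dualCode_iff {n : ℕ} {D : Submodule F (Fin n → F)} (i : Fin n) :
    Pi.single i 1 ∈ dualCode F n D ↔ ∀ d ∈ D, d i = 0 := by
  simp [dualCode, Pi.single_apply]

omit [Fintype F] in
theorem goodCode_one_iff {n m : ℕ} {D : Submodule F (Fin n → F)} :
    goodCode F n 1 m D ↔ finrank F D = m ∧ ∀ i, ∃ d ∈ D, d i ≠ 0 := by
  refine and_congr_right fun _ => ⟨fun h i => ?_, fun h v hv hv0 => ?_⟩
  · by_contra! hi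
    have := h _ ((single_one_mem_dualCode_iff i).2 hi) (Pi.single_ne_zero_iff.2 one_ne_zero)
    simp [hammingNorm, Pi.single_apply, Finset.filter_eq'] at this
  · by_contra! hwt
    obtain ⟨i, hi⟩ := Function.ne_iff.1 hv0
    have hsingle : Pi.single i 1 = (v i)⁻¹ • v := by
      rw [eq_inv_smul_iff₀ hi]
      exact (Pi.eq_smul_single_one_of_hammingNorm_le_one (by omega) hi).symm
    obtain ⟨d, hd, hdi⟩ := h i
    exact hdi ((single_one_mem_dualCode_iff i).1 (hsingle ▸ (dualCode F n D).smul_mem _ hv) d hd)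

/-- In the coordinates of a basis `b` of `C`, this is the column `P_i = (b_1(i), …, b_k(i))`. -/
def coordFunctional {n : ℕ} (C : Submodule F (Fin n → F)) (i : Fin n) : Dual F C :=
  proj i ∘ₗ C.subtype

omit [Fintype F] in
theorem isIsolated_one_iff {n k : ℕ} (hk : 0 < k) {C : Submodule F (Fin n → F)}
    (hC : finrank F C = k) :
    IsIsolated F n 1 k C ↔
      ∀ W : Submodule F C, finrank F W + 1 = finrank F C →
        ∃ i, W ≤ ker (coordFunctional C i) := by
  simp only [IsIsolated, goodCode_one_iff, not_and, not_forall, not_exists, not_not]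
  constructor
  · intro h W hW
    obtain ⟨i, hi⟩ := h _ (Submodule.map_subtype_le C W)
      (by rw [Submodule.finrank_map_subtype_eq]; omega)
    exact ⟨i, fun w hw => hi _ (Submodule.mem_map_of_mem hw)⟩
  · intro h D hDC hD
    have hmap : (D.comap C.subtype).map C.subtype = D := by
      rw [Submodule.map_comap_subtype, inf_eq_right.2 hDC]
    obtain ⟨i, hi⟩ := h (D.comap C.subtype)
      (by rw [← Submodule.finrank_map_subtype_eq, hmap]; omega)
    refine ⟨i, fun d hd => ?_⟩
    rw [← hmap] at hd
    obtain ⟨w, hw, rfl⟩ := hd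
    exact hi hw

end Codes

theorem isolated_nondegenerate_iff_all_points
    {n k : ℕ} (hk : 0 < k)
    (C : Submodule F (Fin n → F)) (hC : goodCode F n 1 k C)
    (b : Module.Basis (Fin k) F ↥C) :
    IsIsolated F n 1 k C ↔
      ∀ v : Fin k → F, v ≠ 0 →
        ∃ (i : Fin n) (c : F), c ≠ 0 ∧ v = c • (fun j => (b j : Fin n → F) i) := by
  obtain ⟨hrank, hnondeg⟩ := goodCode_one_iff.1 hC
  have hcoord_ne_zero (i : Fin n) : coordFunctional C i ≠ 0 := by
    obtain ⟨d, hd, hdi⟩ := hnondeg i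
    exact fun h => hdi (LinearMap.congr_fun h ⟨d, hd⟩)
  have hcol (i : Fin n) : b.constr F (fun j => (b j : Fin n → F) i) = coordFunctional C i :=
    b.ext fun j => b.constr_basis F _ j
  rw [isIsolated_one_iff hk hrank, forall_hyperplane_le_ker_iff _ hcoord_ne_zero,
    (b.constr F).surjective.forall]
  refine forall_congr' fun v => ?_
  simp only [← hcol, ← map_smul, (b.constr F).injective.eq_iff, LinearEquiv.map_ne_zero_iff]
end

section
/- Let C ∈ C_2(n,k) with basis b_1,...,b_k, and let P_i := (b_1(i),...,b_k(i)) ∈ F_q^k for i = 1,...,n be the columns of the corresponding generator matrix. Then C is isolated if and only if the 2-secants of the projective point set determined by the columns cover PG(k−1,q), i.e., every point of PG(k−1,q) lies in the projective span of two of the points ⟨P_i⟩, ⟨P_j⟩. -/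
open Finset

variable (F : Type) [Field F] [Fintype F] [DecidableEq F]

/-!
Let `M` be the generator matrix whose rows are the points `P_i`, so that `C` is the image of
`x ↦ M *ᵥ x` and `v ⬝ᵥ (M *ᵥ x) = (∑ i, v i • P_i) ⬝ᵥ x`. A hyperplane `D` of `C` is the image of
a hyperplane `W` of `F^k`, whose orthogonal is a point `⟨f⟩`; hence a vector `v` of weight at most
two, supported on `{i, j}`, lies in `D^⊥` iff `v i • P_i + v j • P_j ∈ ⟨f⟩`. Projectivity of `C`
rules out `v i • P_i + v j • P_j = 0`, so `D` fails to be projective iff `⟨f⟩` lies on the secant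
through `⟨P_i⟩` and `⟨P_j⟩`.
-/

open Matrix

section Weight

variable {ι R : Type*} [Fintype ι] [DecidableEq ι] [AddMonoid R] [DecidableEq R]

theorem hammingNorm_single_add_single_le (i j : ι) (a b : R) :
    hammingNorm (Pi.single i a + Pi.single j b : ι → R) ≤ 2 := by
  refine (card_le_card fun m hm => ?_).trans (card_le_two (a := i) (b := j))
  by_contra hij
  simp only [mem_insert, mem_singleton, not_or] at hij
  simp [Pi.single_apply, hij.1, hij.2] at hm

theorem exists_eq_single_add_single_of_hammingNorm_le_two [Nontrivial ι] {v : ι → R}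
    (hv : hammingNorm v ≤ 2) :
    ∃ i j, i ≠ j ∧ v = Pi.single i (v i) + Pi.single j (v j) := by
  obtain ⟨t, hsupp, -, ht⟩ := exists_subsuperset_card_eq (subset_univ {m | v m ≠ 0}) hv
    (Fintype.one_lt_card_iff_nontrivial.mpr ‹_›)
  obtain ⟨i, j, hij, rfl⟩ := card_eq_two.mp ht
  refine ⟨i, j, hij, funext fun m => ?_⟩
  by_cases hi : m = i
  · simp [hi, hij]
  by_cases hj : m = j
  · simp [hj, Ne.symm hij]
  have : v m = 0 := by
    by_contra hm
    simpa [hi, hj] using hsupp (mem_filter.mpr ⟨mem_univ m, hm⟩)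
  simp [hi, hj, this]

end Weight

section Secant

variable {ι κ R : Type*} [Fintype ι] [DecidableEq ι] [Semiring R] [DecidableEq R]

theorem exists_mem_span_pair_of_hammingNorm_le_two [Nontrivial ι] (M : Matrix ι κ R)
    {v : ι → R} (hv : hammingNorm v ≤ 2) :
    ∃ i j, i ≠ j ∧ v ᵥ* M ∈ Submodule.span R {M.row i, M.row j} := by
  obtain ⟨i, j, hij, hv⟩ := exists_eq_single_add_single_of_hammingNorm_le_two hv
  refine ⟨i, j, hij, Submodule.mem_span_pair.mpr ⟨v i, v j, ?_⟩⟩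
  rw [hv]
  simp [add_vecMul, hij, Ne.symm hij]

theorem exists_hammingNorm_le_two_of_mem_span_pair (M : Matrix ι κ R) {i j : ι} {g : κ → R}
    (hg : g ∈ Submodule.span R {M.row i, M.row j}) :
    ∃ v : ι → R, hammingNorm v ≤ 2 ∧ v ᵥ* M = g := by
  obtain ⟨a, b, rfl⟩ := Submodule.mem_span_pair.mp hg
  exact ⟨Pi.single i a + Pi.single j b, hammingNorm_single_add_single_le i j a b,
    by simp [add_vecMul]⟩

end Secant

section GeneratorMatrix

variable {ι κ K : Type*} [Fintype κ] [CommSemiring K] {C : Submodule K (ι → K)}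
  (b : Module.Basis κ K C)

theorem mulVecLin_of_basis :
    (Matrix.of fun i l => (b l : ι → K) i).mulVecLin =
      C.subtype ∘ₗ b.equivFun.symm.toLinearMap := by
  ext x i
  simp [Matrix.mulVec, dotProduct, Finset.sum_apply, mul_comm]

theorem range_mulVecLin_of_basis :
    LinearMap.range (Matrix.of fun i l => (b l : ι → K) i).mulVecLin = C := by
  rw [mulVecLin_of_basis, LinearMap.range_comp, LinearEquiv.range, Submodule.map_top,
    Submodule.range_subtype]

theorem injective_mulVecLin_of_basis :
    Function.Injective (Matrix.of fun i l => (b l : ι → K) i).mulVecLin := by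
  rw [mulVecLin_of_basis]
  exact C.injective_subtype.comp b.equivFun.symm.injective

end GeneratorMatrix

section DotProduct

variable {m R : Type*} [Fintype m] [CommSemiring R]

theorem nondegenerate_dotProductBilin [DecidableEq m] :
    LinearMap.BilinForm.Nondegenerate (dotProductBilin R R : LinearMap.BilinForm R (m → R)) :=
  ⟨fun v hv => funext fun i => by simpa using hv (Pi.single i 1),
    fun v hv => funext fun i => by simpa using hv (Pi.single i 1)⟩

theorem isRefl_dotProductBilin :
    LinearMap.BilinForm.IsRefl (dotProductBilin R R : LinearMap.BilinForm R (m → R)) :=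
  fun x y h => by simpa [dotProduct_comm] using h

end DotProduct

section DualCode

variable {K : Type} [Field K]

theorem mem_dualCode {n : ℕ} {W : Submodule K (Fin n → K)} {v : Fin n → K} :
    v ∈ dualCode K n W ↔ ∀ c ∈ W, v ⬝ᵥ c = 0 :=
  Iff.rfl

theorem dualCode_eq_orthogonal (n : ℕ) (W : Submodule K (Fin n → K)) :
    dualCode K n W = LinearMap.BilinForm.orthogonal (dotProductBilin K K) W := by
  ext v
  simp [mem_dualCode, LinearMap.BilinForm.mem_orthogonal_iff, dotProduct_comm]

theorem finrank_dualCode {n : ℕ} (W : Submodule K (Fin n → K)) :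
    Module.finrank K (dualCode K n W) = n - Module.finrank K W := by
  rw [dualCode_eq_orthogonal, LinearMap.BilinForm.finrank_orthogonal
    nondegenerate_dotProductBilin, Module.finrank_fin_fun]

theorem dualCode_dualCode {n : ℕ} (W : Submodule K (Fin n → K)) :
    dualCode K n (dualCode K n W) = W := by
  simp only [dualCode_eq_orthogonal]
  exact LinearMap.BilinForm.orthogonal_orthogonal nondegenerate_dotProductBilin
    isRefl_dotProductBilin W

theorem mem_dualCode_map_mulVecLin {n k : ℕ} (M : Matrix (Fin n) (Fin k) K)
    (W : Submodule K (Fin k → K)) (v : Fin n → K) :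
    v ∈ dualCode K n (W.map M.mulVecLin) ↔ v ᵥ* M ∈ dualCode K k W := by
  simp only [mem_dualCode, Submodule.mem_map, forall_exists_index, and_imp,
    forall_apply_eq_imp_iff₂, mulVecLin_apply, dotProduct_mulVec]

end DualCode

theorem Submodule.eq_span_singleton_of_finrank_eq_one {K V : Type*} [DivisionRing K]
    [AddCommGroup V] [Module K V] {P : Submodule K V} (hP : Module.finrank K P = 1) {g : V}
    (hg : g ∈ P) (hg0 : g ≠ 0) : P = K ∙ g :=
  have : Module.Finite K P := Module.finite_of_finrank_eq_succ hP
  (Submodule.eq_of_le_of_finrank_le ((Submodule.span_singleton_le_iff_mem g P).mpr hg)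
    (by rw [hP, finrank_span_singleton hg0])).symm

section Secants

variable {K : Type} [Field K] [DecidableEq K] {n k : ℕ} {M : Matrix (Fin n) (Fin k) K}

theorem exists_le_span_pair_of_mem_dualCode_map [Nontrivial (Fin n)]
    (hproj : ∀ v ∈ dualCode K n (LinearMap.range M.mulVecLin), v ≠ 0 → 2 + 1 ≤ hammingNorm v)
    {P : Submodule K (Fin k → K)} (hP : Module.finrank K P = 1) {v : Fin n → K}
    (hv : v ∈ dualCode K n ((dualCode K k P).map M.mulVecLin)) (hv0 : v ≠ 0)
    (hwt : hammingNorm v ≤ 2) :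
    ∃ i j, i ≠ j ∧ P ≤ Submodule.span K {M.row i, M.row j} := by
  obtain ⟨i, j, hij, hspan⟩ := exists_mem_span_pair_of_hammingNorm_le_two M hwt
  have hvP : v ᵥ* M ∈ P := by
    rwa [mem_dualCode_map_mulVecLin, dualCode_dualCode] at hv
  have hvM : v ᵥ* M ≠ 0 := by
    intro h
    have hvC : v ∈ dualCode K n (LinearMap.range M.mulVecLin) := by
      rw [← Submodule.map_top, mem_dualCode_map_mulVecLin, h]
      exact zero_mem _
    have := hproj v hvC hv0
    omega
  refine ⟨i, j, hij, ?_⟩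
  rwa [Submodule.eq_span_singleton_of_finrank_eq_one hP hvP hvM,
    Submodule.span_singleton_le_iff_mem]

theorem exists_mem_dualCode_map_of_mem_span_pair {W : Submodule K (Fin k → K)} {i j : Fin n}
    {f : Fin k → K} (hf : f ∈ dualCode K k W) (hf0 : f ≠ 0)
    (hfij : f ∈ Submodule.span K {M.row i, M.row j}) :
    ∃ v ∈ dualCode K n (W.map M.mulVecLin), v ≠ 0 ∧ hammingNorm v ≤ 2 := by
  obtain ⟨v, hwt, rfl⟩ := exists_hammingNorm_le_two_of_mem_span_pair M hfij
  exact ⟨v, (mem_dualCode_map_mulVecLin M W v).mpr hf, fun h => hf0 (by simp [h]), hwt⟩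

end Secants

/-- A code `C ∈ C_2(n,k)` with basis `b` is isolated iff every point of
`PG(k-1,q)` lies on the projective span of two of the points determined by the columns of
the corresponding generator matrix. -/
theorem isolated_projective_iff_secants_cover
    {n k : ℕ} (hk : 1 < k) (hkn : k < n)
    (C : Submodule F (Fin n → F)) (hC : goodCode F n 2 k C)
    (b : Module.Basis (Fin k) F ↥C) :
    IsIsolated F n 2 k C ↔
      ∀ P : Submodule F (Fin k → F), Module.finrank F P = 1 →
        ∃ i j : Fin n, i ≠ j ∧
          P ≤ Submodule.span F
            {(fun l => (b l : Fin n → F) i), (fun l => (b l : Fin n → F) j)} := by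
  have : Nontrivial (Fin n) := Fin.nontrivial_iff_two_le.mpr (by omega)
  set M : Matrix (Fin n) (Fin k) F := Matrix.of fun i l => (b l : Fin n → F) i
  have hMC : LinearMap.range M.mulVecLin = C := range_mulVecLin_of_basis b
  have hfinrank (W : Submodule F (Fin k → F)) :
      Module.finrank F (W.map M.mulVecLin) = Module.finrank F W :=
    (Submodule.equivMapOfInjective _ (injective_mulVecLin_of_basis b) W).finrank_eq.symm
  change _ ↔ ∀ P : Submodule F (Fin k → F), Module.finrank F P = 1 →
    ∃ i j, i ≠ j ∧ P ≤ Submodule.span F {M.row i, M.row j}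
  constructor
  · intro hiso P hP
    have hbad := hiso ((dualCode F k P).map M.mulVecLin) (hMC ▸ LinearMap.map_le_range)
    simp only [goodCode, hfinrank, finrank_dualCode, hP, true_and,
      not_forall, not_le] at hbad
    obtain ⟨v, hv, hv0, hwt⟩ := hbad
    exact exists_le_span_pair_of_mem_dualCode_map (hMC ▸ hC.2) hP hv hv0 (by omega)
  · intro hcov D hDC hD
    set W := D.comap M.mulVecLin
    have hWD : W.map M.mulVecLin = D := Submodule.map_comap_eq_of_le (hMC ▸ hDC)
    have hP : Module.finrank F (dualCode F k W) = 1 := by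
      rw [finrank_dualCode, ← hfinrank, hWD, hD.1]
      omega
    obtain ⟨i, j, -, hij⟩ := hcov _ hP
    obtain ⟨f, hf, hf0⟩ := Submodule.exists_mem_ne_zero_of_ne_bot
      (Submodule.one_le_finrank_iff.mp hP.ge)
    obtain ⟨v, hv, hv0, hwt⟩ := exists_mem_dualCode_map_of_mem_span_pair hf hf0 (hij hf)
    have := hD.2 v (hWD ▸ hv) hv0
    omega
end

section
/- If t < k and q^{k−t} > binomial(n,t), then C_t(n,k) is nonempty and contains no isolated codes, i.e., I_t(n,k) = ∅. -/
open Finset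

variable (F : Type) [Field F] [Fintype F] [DecidableEq F]

open Module Submodule

/-! A hyperplane `ker ψ` of a code `C` with dual distance `> t`, for a nonzero
functional `ψ` on `C`, keeps dual distance `> t` unless `ψ` is the restriction to `C` of
`c ↦ v ⬝ᵥ c` for some `v` of weight at most `t`: every dual vector of the hyperplane
restricts to a multiple of `ψ`. There are at most `binom(n,t) q^t` such restrictions; when
this is less than `q^(dim C)`, the number of functionals on `C`, some hyperplane is good.
This shows that no code of dimension `k` is isolated, and descending from `F^n` one
dimension at a time produces a code in `C_t(n,k)`. -/

theorem card_filter_hammingNorm_le {ι R : Type*} [Fintype ι] [DecidableEq ι] [Zero R]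
    [Fintype R] [DecidableEq R] {t : ℕ} (ht : t ≤ Fintype.card ι) :
    #{v : ι → R | hammingNorm v ≤ t} ≤ (Fintype.card ι).choose t * Fintype.card R ^ t := by
  let extend (A : Finset ι) (g : A → R) : ι → R :=
    fun i => if h : i ∈ A then g ⟨i, h⟩ else 0
  have hcover : ({v : ι → R | hammingNorm v ≤ t} : Finset _) ⊆
      (powersetCard t univ).biUnion fun A => univ.image (extend A) := by
    intro v hv
    obtain ⟨A, hsupp, hA⟩ := exists_superset_card_eq (s := {i | v i ≠ 0}) (mem_filter.1 hv).2
      (by simpa using ht)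
    refine mem_biUnion.2 ⟨A, mem_powersetCard.2 ⟨subset_univ A, hA⟩,
      mem_image.2 ⟨fun i => v i, mem_univ _, funext fun i => ?_⟩⟩
    by_cases hi : i ∈ A
    · simp [extend, hi]
    · simpa [extend, hi, eq_comm] using mt (@hsupp i) hi
  calc #{v : ι → R | hammingNorm v ≤ t}
      ≤ ∑ A ∈ powersetCard t univ, #(univ.image (extend A)) :=
        (card_le_card hcover).trans card_biUnion_le
    _ ≤ ∑ A ∈ powersetCard t (univ : Finset ι), Fintype.card R ^ t :=
        sum_le_sum fun A hA => card_image_le.trans (by simp [(mem_powersetCard.1 hA).2])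
    _ = (Fintype.card ι).choose t * Fintype.card R ^ t := by simp

theorem mem_span_singleton_of_ker_le_ker {K V : Type*} [Field K] [AddCommGroup V] [Module K V]
    {φ ψ : Module.Dual K V} (h : LinearMap.ker ψ ≤ LinearMap.ker φ) : φ ∈ K ∙ ψ := by
  simpa using mem_span_of_iInf_ker_le_ker (L := fun _ : Unit => ψ) (by simpa using h)

def dotProductDual {K ι : Type*} [Field K] [Fintype ι] [DecidableEq ι]
    (C : Submodule K (ι → K)) : (ι → K) →ₗ[K] Module.Dual K C :=
  C.subtype.dualMap ∘ₗ (dotProductEquiv K ι).toLinearMap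

theorem mem_dualCode_iff_dotProductDual_eq_zero {K : Type} [Field K] {n : ℕ}
    {C : Submodule K (Fin n → K)} {v : Fin n → K} :
    v ∈ dualCode K n C ↔ dotProductDual C v = 0 :=
  ⟨fun h => LinearMap.ext fun c => h c c.2, fun h c hc => LinearMap.congr_fun h ⟨c, hc⟩⟩

theorem exists_smul_eq_dotProductDual_of_mem_dualCode_map_ker {K : Type} [Field K] {n : ℕ}
    {C : Submodule K (Fin n → K)} {ψ : Module.Dual K C} {v : Fin n → K}
    (hv : v ∈ dualCode K n ((LinearMap.ker ψ).map C.subtype)) :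
    ∃ a : K, a • ψ = dotProductDual C v :=
  mem_span_singleton.1 (mem_span_singleton_of_ker_le_ker fun c hc => hv c ⟨c, hc, rfl⟩)

theorem goodCode_map_ker {K : Type} [Field K] [DecidableEq K] {n t j : ℕ}
    {C : Submodule K (Fin n → K)} (hC : goodCode K n t j C) {ψ : Module.Dual K C}
    (hψ : ψ ≠ 0) (hshort : ∀ v, hammingNorm v ≤ t → dotProductDual C v ≠ ψ) :
    goodCode K n t (j - 1) ((LinearMap.ker ψ).map C.subtype) := by
  refine ⟨?_, fun v hv hv0 => ?_⟩
  · rw [finrank_map_subtype_eq, ← hC.1, ← ψ.finrank_ker_add_one_of_ne_zero hψ,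
      Nat.add_sub_cancel]
  · by_contra! hwt
    obtain ⟨a, ha⟩ := exists_smul_eq_dotProductDual_of_mem_dualCode_map_ker hv
    rcases eq_or_ne a 0 with rfl | ha0
    · rw [zero_smul, eq_comm, ← mem_dualCode_iff_dotProductDual_eq_zero] at ha
      exact hwt.not_ge (hC.2 v ha hv0)
    · refine hshort (a⁻¹ • v)
        (hammingNorm_smul_le_hammingNorm.trans (Nat.lt_succ_iff.1 hwt)) ?_
      rw [map_smul, ← ha, inv_smul_smul₀ ha0]

theorem exists_hyperplane_goodCode {K : Type} [Field K] [Fintype K] [DecidableEq K]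
    {n t j : ℕ} (htn : t ≤ n) {C : Submodule K (Fin n → K)} (hC : goodCode K n t j C)
    (hq : n.choose t * Fintype.card K ^ t < Fintype.card K ^ j) :
    ∃ D ≤ C, goodCode K n t (j - 1) D := by
  classical
  have := Module.finite_of_finite K (M := Module.Dual K C)
  have := Fintype.ofFinite (Module.Dual K C)
  let shortDuals := ({v : Fin n → K | hammingNorm v ≤ t} : Finset _).image (dotProductDual C)
  have hcard : #shortDuals < #(univ : Finset (Module.Dual K C)) :=
    calc #shortDuals ≤ n.choose t * Fintype.card K ^ t :=
          card_image_le.trans <| by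
            simpa using card_filter_hammingNorm_le (ι := Fin n) (R := K) (by simpa)
      _ < Fintype.card K ^ j := hq
      _ = #univ := by
        rw [card_univ, card_eq_pow_finrank (K := K) (V := Module.Dual K C),
          Subspace.dual_finrank_eq, hC.1]
  obtain ⟨ψ, -, hψ⟩ := exists_mem_notMem_of_card_lt_card hcard
  have hshort : ∀ v, hammingNorm v ≤ t → dotProductDual C v ≠ ψ :=
    fun v hv h => hψ (mem_image.2 ⟨v, by simpa using hv, h⟩)
  have hψ0 : ψ ≠ 0 := fun h => hshort 0 (by simp) (by rw [map_zero, h])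
  exact ⟨_, map_subtype_le _ _, goodCode_map_ker hC hψ0 hshort⟩

theorem goodCode_top (K : Type) [Field K] [DecidableEq K] (n t : ℕ) : goodCode K n t n ⊤ := by
  refine ⟨by simp, fun v hv hv0 => absurd (funext fun i => ?_) hv0⟩
  simpa [Pi.single_apply] using hv (Pi.single i 1) mem_top

theorem exists_goodCode {K : Type} [Field K] [Fintype K] [DecidableEq K] {n t k : ℕ}
    (htn : t ≤ n) (hkn : k ≤ n)
    (hq : n.choose t * Fintype.card K ^ t < Fintype.card K ^ (k + 1)) :
    ∃ C, goodCode K n t k C := by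
  induction hkn using Nat.decreasingInduction with
  | self => exact ⟨⊤, goodCode_top K n t⟩
  | of_succ j hjn ih =>
    obtain ⟨C, hC⟩ := ih (hq.trans_le (Nat.pow_le_pow_right Fintype.card_pos j.succ.le_succ))
    obtain ⟨D, -, hD⟩ := exists_hyperplane_goodCode htn hC hq
    exact ⟨D, hD⟩

theorem no_isolated_of_large_q
    {n k t : ℕ} (hkn : k < n) (htk : t < k)
    (hq : Nat.choose n t < Fintype.card F ^ (k - t)) :
    (∃ C : Submodule F (Fin n → F), goodCode F n t k C) ∧
    ∀ C : Submodule F (Fin n → F), goodCode F n t k C → ¬ IsIsolated F n t k C := by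
  have htn : t ≤ n := by omega
  have hqk : n.choose t * Fintype.card F ^ t < Fintype.card F ^ k :=
    calc n.choose t * Fintype.card F ^ t < Fintype.card F ^ (k - t) * Fintype.card F ^ t :=
          Nat.mul_lt_mul_of_pos_right hq (by positivity)
      _ = Fintype.card F ^ k := by rw [← pow_add, Nat.sub_add_cancel htk.le]
  refine ⟨exists_goodCode htn hkn.le (hqk.trans_le ?_), fun C hC hiso => ?_⟩
  · exact Nat.pow_le_pow_right Fintype.card_pos k.le_succ
  · obtain ⟨D, hDC, hD⟩ := exists_hyperplane_goodCode htn hC hqk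
    exact hiso D hDC hD
end

section
/- Suppose X, Y ∈ C_t(n,k) with dim(X ∩ Y) = k−1 but X ∩ Y ∉ C_t(n,k−1). Then there exists a k-dimensional subspace Z of F_q^n with X ∩ Y ⊂ Z ⊂ X + Y such that Z ∉ C_t(n,k). -/
open Finset

variable (F : Type) [Field F] [Fintype F] [DecidableEq F]

/-!
A nonzero vector `v ∈ (X ∩ Y)^⊥` of weight at most `t` cannot lie in `X^⊥`, since `X` is good.
Hence the hyperplane `v^⊥` cuts the `(k+1)`-dimensional space `X + Y` in a `k`-space `Z`
containing `X ∩ Y`, and `v ∈ Z^⊥` shows that `Z` is bad.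
-/

theorem Submodule.finrank_inf_ker_add_one {K V : Type*} [DivisionRing K] [AddCommGroup V]
    [Module K V] [FiniteDimensional K V] {W : Submodule K V} {f : Module.Dual K V}
    (hW : ¬ W ≤ LinearMap.ker f) :
    Module.finrank K ↥(W ⊓ LinearMap.ker f) + 1 = Module.finrank K W := by
  have hf : f ≠ 0 := by rintro rfl; simp at hW
  have hcoatom := LinearMap.isCoatom_ker_of_surjective (f.surjective hf)
  have hsup : W ⊔ LinearMap.ker f = ⊤ := by
    rw [sup_comm]; exact codisjoint_iff.1 (hcoatom.not_le_iff_codisjoint.1 hW)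
  have := Submodule.finrank_sup_add_finrank_inf_eq W (LinearMap.ker f)
  rw [hsup, finrank_top, ← f.finrank_ker_add_one_of_ne_zero hf] at this
  omega

theorem mem_dualCode_iff_le_ker {K : Type} [Field K] {n : ℕ} {C : Submodule K (Fin n → K)}
    {v : Fin n → K} : v ∈ dualCode K n C ↔ C ≤ LinearMap.ker (dotProductEquiv K (Fin n) v) :=
  Iff.rfl

theorem not_goodCode_iff {K : Type} [Field K] [DecidableEq K] {n t k : ℕ}
    {C : Submodule K (Fin n → K)} (hC : Module.finrank K C = k) :
    ¬ goodCode K n t k C ↔ ∃ v ∈ dualCode K n C, v ≠ 0 ∧ hammingNorm v ≤ t := by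
  simp only [goodCode, hC, true_and, not_forall, Nat.not_le, Nat.lt_succ_iff, exists_prop]

theorem exists_bad_code_on_line
    {n k t : ℕ}
    (X Y : Submodule F (Fin n → F)) (hX : goodCode F n t k X) (hY : goodCode F n t k Y)
    (hdim : Module.finrank F ↥(X ⊓ Y) = k - 1)
    (hbad : ¬ goodCode F n t (k-1) (X ⊓ Y)) :
    ∃ Z : Submodule F (Fin n → F), Module.finrank F Z = k ∧
      X ⊓ Y < Z ∧ Z < X ⊔ Y ∧ ¬ goodCode F n t k Z := by
  obtain ⟨v, hv, hv0, hwt⟩ := (not_goodCode_iff hdim).1 hbad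
  set f := dotProductEquiv F (Fin n) v
  have hXf : ¬ X ≤ LinearMap.ker f := fun h =>
    (not_goodCode_iff hX.1).2 ⟨v, mem_dualCode_iff_le_ker.2 h, hv0, hwt⟩ hX
  have hXYf : ¬ X ⊔ Y ≤ LinearMap.ker f := fun h => hXf (le_sup_left.trans h)
  have hZ_succ := Submodule.finrank_inf_ker_add_one hXYf
  have hsup := Submodule.finrank_sup_add_finrank_inf_eq X Y
  rw [hX.1, hY.1, hdim] at hsup
  have hZk : Module.finrank F ↥((X ⊔ Y) ⊓ LinearMap.ker f) = k := by omega
  refine ⟨(X ⊔ Y) ⊓ LinearMap.ker f, hZk, ?_, inf_lt_left.2 hXYf,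
    (not_goodCode_iff hZk).2 ⟨v, mem_dualCode_iff_le_ker.2 inf_le_right, hv0, hwt⟩⟩
  refine Submodule.lt_of_le_of_finrank_lt_finrank
    (le_inf (inf_le_left.trans le_sup_left) (mem_dualCode_iff_le_ker.1 hv)) ?_
  omega
end
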